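/- arXiv:1810.02282 — 2 statements merged into one kernel-verified Lean document; each statement's English description precedes it below -/
import Mathlib

section
/- For any w₁ = (u₁,v₁), w₂ = (u₂,v₂) ∈ V = H¹ × H¹, the drift of the coupled slow-fast Navier–Stokes/reaction–diffusion system satisfies the local monotonicity estimate: ⟨Ãw₁ + F(w₁) - Ãw₂ - F(w₂), w₁-w₂⟩ + |σ(w₁)-σ(w₂)|²_{L_Q} ≤ C(1 + |u₂|⁴_{L⁴}) |w₁-w₂|²_{H}, where Ãw = (Au, (1/ε)Av), F(w) = (-B(u) + f(u,v), (1/ε) g(u,v)), and σ(w) = (σ₁(u), (1/√ε) σ₂(u,v)). -/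
/-!
The Stokes operator contributes the dissipation `-‖u₁ - u₂‖₁²` (and a nonpositive fast term).
In the nonlinear term, Young's inequality with exponents `4/3` and `4` trades
`‖u₁ - u₂‖₁^{3/2} |u₁ - u₂|^{1/2} |u₂|_{L⁴}` for `‖u₁ - u₂‖₁² + 4 |u₂|⁴_{L⁴} |u₁ - u₂|²`, and the
first summand is absorbed by the dissipation. All remaining terms come from Lipschitz maps and
are bounded by a constant times `|u₁ - u₂|² + |v₁ - v₂|²`.
-/

open scoped RealInnerProductSpace

lemma two_mul_rpow_mul_rpow_mul_le {a x L : ℝ} (ha : 0 ≤ a) (hx : 0 ≤ x) (hL : 0 ≤ L) :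
    2 * a ^ ((3 : ℝ) / 2) * x ^ ((1 : ℝ) / 2) * L ≤ a ^ 2 + 4 * L ^ 4 * x ^ 2 := by
  have hpq : ((4 : ℝ) / 3).HolderConjugate 4 :=
    Real.holderConjugate_iff.mpr ⟨by norm_num, by norm_num⟩
  have young := Real.young_inequality_of_nonneg (Real.rpow_nonneg ha ((3 : ℝ) / 2))
    (by positivity : 0 ≤ 2 * L * x ^ ((1 : ℝ) / 2)) hpq
  have ha2 : (a ^ ((3 : ℝ) / 2)) ^ ((4 : ℝ) / 3) = a ^ 2 := by
    rw [← Real.rpow_mul ha]; norm_num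
  have hx4 : (2 * L * x ^ ((1 : ℝ) / 2)) ^ (4 : ℝ) = 16 * L ^ 4 * x ^ 2 := by
    have hsqrt : (x ^ ((1 : ℝ) / 2)) ^ 4 = x ^ 2 := by
      rw [← Real.rpow_natCast, ← Real.rpow_mul hx]; norm_num
    rw [show (4 : ℝ) = (4 : ℕ) by norm_num, Real.rpow_natCast, mul_pow, mul_pow, hsqrt]
    ring
  rw [ha2, hx4] at young
  nlinarith [sq_nonneg a]

lemma add_mul_le_two_mul_sq_add_sq (x y : ℝ) : (x + y) * x ≤ 2 * (x ^ 2 + y ^ 2) := by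
  nlinarith [sq_nonneg (x - y), sq_nonneg y]

lemma sq_le_two_mul_sq_mul_sq_add_sq {s C x y : ℝ} (hs : 0 ≤ s) (h : s ≤ C * (x + y)) :
    s ^ 2 ≤ 2 * C ^ 2 * (x ^ 2 + y ^ 2) :=
  calc s ^ 2 ≤ (C * (x + y)) ^ 2 := pow_le_pow_left₀ hs h 2
    _ = C ^ 2 * (x + y) ^ 2 := mul_pow _ _ _
    _ ≤ C ^ 2 * (2 * (x ^ 2 + y ^ 2)) := mul_le_mul_of_nonneg_left add_sq_le (sq_nonneg C)
    _ = 2 * C ^ 2 * (x ^ 2 + y ^ 2) := by ring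

lemma add_mul_le_add_mul_one_add_mul {a b L D : ℝ} (ha : 0 ≤ a) (hb : 0 ≤ b) (hL : 0 ≤ L)
    (hD : 0 ≤ D) : a * D + b * L * D ≤ (a + b) * (1 + L) * D := by
  nlinarith [mul_nonneg (mul_nonneg ha hL) hD, mul_nonneg hb hD]

section InnerProductSpace

variable {E : Type*} [NormedAddCommGroup E] [InnerProductSpace ℝ E]

lemma real_inner_le_two_mul_sq_add_sq {p w : E} {C y : ℝ} (hC : 0 ≤ C)
    (hp : ‖p‖ ≤ C * (‖w‖ + y)) : ⟪p, w⟫ ≤ 2 * C * (‖w‖ ^ 2 + y ^ 2) :=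
  calc ⟪p, w⟫ ≤ C * (‖w‖ + y) * ‖w‖ :=
        (real_inner_le_norm p w).trans (mul_le_mul_of_nonneg_right hp (norm_nonneg w))
    _ = C * ((‖w‖ + y) * ‖w‖) := mul_assoc _ _ _
    _ ≤ C * (2 * (‖w‖ ^ 2 + y ^ 2)) :=
        mul_le_mul_of_nonneg_left (add_mul_le_two_mul_sq_add_sq _ _) hC
    _ = 2 * C * (‖w‖ ^ 2 + y ^ 2) := by ring

lemma real_inner_map_sub_self {A : E →ₗ[ℝ] E} {n : E → ℝ} (hA : ∀ u, ⟪A u, u⟫ = -n u ^ 2)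
    (u₁ u₂ : E) : ⟪A u₁ - A u₂, u₁ - u₂⟫ = -n (u₁ - u₂) ^ 2 := by
  rw [← map_sub, hA]

lemma neg_real_inner_le_of_interpolation {b w : E} {a L : ℝ} (ha : 0 ≤ a) (hL : 0 ≤ L)
    (hb : |⟪b, w⟫| ≤ 2 * a ^ ((3 : ℝ) / 2) * ‖w‖ ^ ((1 : ℝ) / 2) * L) :
    -⟪b, w⟫ ≤ a ^ 2 + 4 * L ^ 4 * ‖w‖ ^ 2 :=
  (neg_le_abs _).trans (hb.trans (two_mul_rpow_mul_rpow_mul_le ha (norm_nonneg w) hL))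

end InnerProductSpace

/-- `n1` and `nL4` play the roles of the `H¹` and `L⁴` norms, and `B₂ u u` that of `B(u)`. -/
theorem stmt12_general {H W₁ W₂ : Type*} [NormedAddCommGroup H] [InnerProductSpace ℝ H]
    [NormedAddCommGroup W₁] [NormedAddCommGroup W₂]
    (ε : ℝ) (hε : ε ∈ Set.Ioo (0 : ℝ) 1)
    (AA : H →ₗ[ℝ] H) (B₂ : H → H → H) (f g : H → H → H)
    (σ₁ : H → W₁) (σ₂ : H → H → W₂)
    (n1 nL4 : H → ℝ) (hn1 : ∀ u, 0 ≤ n1 u) (hnL4 : ∀ u, 0 ≤ nL4 u)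
    (hA : ∀ u, ⟪AA u, u⟫ = -(n1 u) ^ 2)
    (hB : ∀ u₁ u₂ : H, |⟪B₂ u₁ u₁ - B₂ u₂ u₂, u₁ - u₂⟫|
      ≤ 2 * (n1 (u₁ - u₂)) ^ ((3 : ℝ) / 2) * ‖u₁ - u₂‖ ^ ((1 : ℝ) / 2) * nL4 u₂)
    (Cf Cg Cσ₁ Cσ₂ : ℝ) (hCf : 0 ≤ Cf) (hCg : 0 ≤ Cg)
    (hf : ∀ x₁ y₁ x₂ y₂ : H, ‖f x₁ y₁ - f x₂ y₂‖ ≤ Cf * (‖x₁ - x₂‖ + ‖y₁ - y₂‖))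
    (hg : ∀ x₁ y₁ x₂ y₂ : H, ‖g x₁ y₁ - g x₂ y₂‖ ≤ Cg * (‖x₁ - x₂‖ + ‖y₁ - y₂‖))
    (hσ₁ : ∀ x₁ x₂ : H, ‖σ₁ x₁ - σ₁ x₂‖ ≤ Cσ₁ * ‖x₁ - x₂‖)
    (hσ₂ : ∀ x₁ y₁ x₂ y₂ : H, ‖σ₂ x₁ y₁ - σ₂ x₂ y₂‖ ≤ Cσ₂ * (‖x₁ - x₂‖ + ‖y₁ - y₂‖)) :
    ∃ C > (0 : ℝ), ∀ u₁ v₁ u₂ v₂ : H,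
      ⟪AA u₁ - AA u₂, u₁ - u₂⟫ + (1 / ε) * ⟪AA v₁ - AA v₂, v₁ - v₂⟫
        + ⟪(f u₁ v₁ - B₂ u₁ u₁) - (f u₂ v₂ - B₂ u₂ u₂), u₁ - u₂⟫
        + (1 / ε) * ⟪g u₁ v₁ - g u₂ v₂, v₁ - v₂⟫
        + ‖σ₁ u₁ - σ₁ u₂‖ ^ 2 + (1 / ε) * ‖σ₂ u₁ v₁ - σ₂ u₂ v₂‖ ^ 2
      ≤ C * (1 + (nL4 u₂) ^ 4) * (‖u₁ - u₂‖ ^ 2 + ‖v₁ - v₂‖ ^ 2) := by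
  have he : 0 ≤ 1 / ε := one_div_nonneg.mpr hε.1.le
  set K := 2 * Cf + Cσ₁ ^ 2 + 1 / ε * (2 * Cg + 2 * Cσ₂ ^ 2)
  have hK : 0 ≤ K := by positivity
  refine ⟨K + 4, by positivity, fun u₁ v₁ u₂ v₂ => ?_⟩
  set D := ‖u₁ - u₂‖ ^ 2 + ‖v₁ - v₂‖ ^ 2
  have hf' : ⟪f u₁ v₁ - f u₂ v₂, u₁ - u₂⟫ ≤ 2 * Cf * D :=
    real_inner_le_two_mul_sq_add_sq hCf (hf u₁ v₁ u₂ v₂)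
  have hg' : ⟪g u₁ v₁ - g u₂ v₂, v₁ - v₂⟫ ≤ 2 * Cg * D := by
    have h := real_inner_le_two_mul_sq_add_sq (y := ‖u₁ - u₂‖) hCg
      (by rw [add_comm ‖v₁ - v₂‖]; exact hg u₁ v₁ u₂ v₂)
    rwa [add_comm (‖v₁ - v₂‖ ^ 2)] at h
  have hB' : -⟪B₂ u₁ u₁ - B₂ u₂ u₂, u₁ - u₂⟫ ≤ n1 (u₁ - u₂) ^ 2 + 4 * nL4 u₂ ^ 4 * D :=
    (neg_real_inner_le_of_interpolation (hn1 _) (hnL4 u₂) (hB u₁ u₂)).trans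
      (by gcongr; exact le_add_of_nonneg_right (sq_nonneg _))
  have hσ₁' : ‖σ₁ u₁ - σ₁ u₂‖ ^ 2 ≤ Cσ₁ ^ 2 * D :=
    calc _ ≤ (Cσ₁ * ‖u₁ - u₂‖) ^ 2 := pow_le_pow_left₀ (norm_nonneg _) (hσ₁ u₁ u₂) 2
      _ ≤ Cσ₁ ^ 2 * D := by
        rw [mul_pow]; gcongr; exact le_add_of_nonneg_right (sq_nonneg _)
  have hσ₂' := sq_le_two_mul_sq_mul_sq_add_sq (norm_nonneg _) (hσ₂ u₁ v₁ u₂ v₂)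
  have hv : 1 / ε * -n1 (v₁ - v₂) ^ 2 ≤ 0 := mul_nonpos_of_nonneg_of_nonpos he (by nlinarith)
  have hsplit : (f u₁ v₁ - B₂ u₁ u₁) - (f u₂ v₂ - B₂ u₂ u₂)
      = (f u₁ v₁ - f u₂ v₂) - (B₂ u₁ u₁ - B₂ u₂ u₂) := by abel
  rw [real_inner_map_sub_self hA, real_inner_map_sub_self hA, hsplit, inner_sub_left]
  calc _ ≤ K * D + 4 * nL4 u₂ ^ 4 * D := by
        linarith [mul_le_mul_of_nonneg_left hg' he, mul_le_mul_of_nonneg_left hσ₂' he]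
    _ ≤ (K + 4) * (1 + nL4 u₂ ^ 4) * D :=
        add_mul_le_add_mul_one_add_mul hK zero_le_four (by positivity) (by positivity)

/-- Local monotonicity for the coupled slow-fast Navier–Stokes/reaction–diffusion
system: with `Ãw = (Au, (1/ε)Av)`, `F(w) = (-B(u)+f(u,v), (1/ε)g(u,v))`,
`σ(w) = (σ₁(u), (1/√ε)σ₂(u,v))`, one has
`⟨Ãw₁+F(w₁)-Ãw₂-F(w₂), w₁-w₂⟩ + |σ(w₁)-σ(w₂)|² ≤ C(1+|u₂|⁴_{L⁴})|w₁-w₂|²_H`.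
Here `⟨Au,u⟩ = -‖u‖₁²` (Stokes operator), the nonlinearity satisfies
`|⟨B(u₁)-B(u₂), u₁-u₂⟩| ≤ 2‖u₁-u₂‖₁^{3/2}|u₁-u₂|^{1/2}|u₂|_{L⁴}` (cancellation
plus interpolation), and `f, g, σ₁, σ₂` are Lipschitz. -/
theorem stmt12 {H W₁ W₂ : Type*} [NormedAddCommGroup H] [InnerProductSpace ℝ H]
    [NormedAddCommGroup W₁] [NormedAddCommGroup W₂]
    (ε : ℝ) (hε : ε ∈ Set.Ioo (0 : ℝ) 1)
    (AA : H →ₗ[ℝ] H) (B₂ : H → H → H) (f g : H → H → H)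
    (σ₁ : H → W₁) (σ₂ : H → H → W₂)
    (n1 nL4 : H → ℝ) (hn1 : ∀ u, 0 ≤ n1 u) (hnL4 : ∀ u, 0 ≤ nL4 u)
    (hA : ∀ u, ⟪AA u, u⟫ = -(n1 u) ^ 2)
    (hB : ∀ u₁ u₂ : H, |⟪B₂ u₁ u₁ - B₂ u₂ u₂, u₁ - u₂⟫|
      ≤ 2 * (n1 (u₁ - u₂)) ^ ((3 : ℝ) / 2) * ‖u₁ - u₂‖ ^ ((1 : ℝ) / 2) * nL4 u₂)
    (Cf Cg Cσ₁ Cσ₂ : ℝ) (hCf : 0 ≤ Cf) (hCg : 0 ≤ Cg) (hCσ₁ : 0 ≤ Cσ₁) (hCσ₂ : 0 ≤ Cσ₂)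
    (hf : ∀ x₁ y₁ x₂ y₂ : H, ‖f x₁ y₁ - f x₂ y₂‖ ≤ Cf * (‖x₁ - x₂‖ + ‖y₁ - y₂‖))
    (hg : ∀ x₁ y₁ x₂ y₂ : H, ‖g x₁ y₁ - g x₂ y₂‖ ≤ Cg * (‖x₁ - x₂‖ + ‖y₁ - y₂‖))
    (hσ₁ : ∀ x₁ x₂ : H, ‖σ₁ x₁ - σ₁ x₂‖ ≤ Cσ₁ * ‖x₁ - x₂‖)
    (hσ₂ : ∀ x₁ y₁ x₂ y₂ : H, ‖σ₂ x₁ y₁ - σ₂ x₂ y₂‖ ≤ Cσ₂ * (‖x₁ - x₂‖ + ‖y₁ - y₂‖)) :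
    ∃ C > (0 : ℝ), ∀ u₁ v₁ u₂ v₂ : H,
      ⟪AA u₁ - AA u₂, u₁ - u₂⟫ + (1 / ε) * ⟪AA v₁ - AA v₂, v₁ - v₂⟫
        + ⟪(f u₁ v₁ - B₂ u₁ u₁) - (f u₂ v₂ - B₂ u₂ u₂), u₁ - u₂⟫
        + (1 / ε) * ⟪g u₁ v₁ - g u₂ v₂, v₁ - v₂⟫
        + ‖σ₁ u₁ - σ₁ u₂‖ ^ 2 + (1 / ε) * ‖σ₂ u₁ v₁ - σ₂ u₂ v₂‖ ^ 2
      ≤ C * (1 + (nL4 u₂) ^ 4) * (‖u₁ - u₂‖ ^ 2 + ‖v₁ - v₂‖ ^ 2) :=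
  stmt12_general ε hε AA B₂ f g σ₁ σ₂ n1 nL4 hn1 hnL4 hA hB Cf Cg Cσ₁ Cσ₂ hCf hCg hf hg hσ₁ hσ₂
end

section
/- For any w = (u,v) ∈ V = H¹ × H¹ and ε ∈ (0,1), the coercivity estimate ⟨Ãw + F(w), w⟩ + |σ(w)|²_{L_Q} ≤ -C_ε ‖w‖²_V + C(1 + |w|²_H) holds for constants C_ε, C > 0, using ⟨B(u), u⟩ = 0. -/
open scoped RealInnerProductSpace

/-- Coercivity for the coupled slow-fast system: with `Ãw = (Au, (1/ε)Av)`,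
`F(w) = (-B(u)+f(u,v), (1/ε)g(u,v))`, `σ(w) = (σ₁(u), (1/√ε)σ₂(u,v))`, using the
cancellation `⟨B(u), u⟩ = 0` and linear growth of `f, g, σ₁, σ₂`, one has
`⟨Ãw+F(w), w⟩ + |σ(w)|² ≤ -C_ε‖w‖²_V + C(1+|w|²_H)` for every `w = (u,v) ∈ V`. -/
theorem stmt13 {H W₁ W₂ : Type*} [NormedAddCommGroup H] [InnerProductSpace ℝ H]
    [NormedAddCommGroup W₁] [NormedAddCommGroup W₂]
    (ε : ℝ) (hε : ε ∈ Set.Ioo (0 : ℝ) 1)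
    (AA : H →ₗ[ℝ] H) (B₂ : H → H → H) (f g : H → H → H)
    (σ₁ : H → W₁) (σ₂ : H → H → W₂)
    (n1 : H → ℝ) (hn1 : ∀ u, 0 ≤ n1 u)
    (hA : ∀ u, ⟪AA u, u⟫ = -(n1 u) ^ 2)
    (hB0 : ∀ u : H, ⟪B₂ u u, u⟫ = 0)
    (Cf Cg Cσ₁ Cσ₂ : ℝ) (hCf : 0 ≤ Cf) (hCg : 0 ≤ Cg) (hCσ₁ : 0 ≤ Cσ₁) (hCσ₂ : 0 ≤ Cσ₂)
    (hf : ∀ x y : H, ‖f x y‖ ≤ Cf * (1 + ‖x‖ + ‖y‖))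
    (hg : ∀ x y : H, ‖g x y‖ ≤ Cg * (1 + ‖x‖ + ‖y‖))
    (hσ₁ : ∀ x : H, ‖σ₁ x‖ ≤ Cσ₁ * (1 + ‖x‖))
    (hσ₂ : ∀ x y : H, ‖σ₂ x y‖ ≤ Cσ₂ * (1 + ‖x‖ + ‖y‖)) :
    ∃ Cε > (0 : ℝ), ∃ C > (0 : ℝ), ∀ u v : H,
      ⟪AA u, u⟫ + (1 / ε) * ⟪AA v, v⟫
        + ⟪f u v - B₂ u u, u⟫ + (1 / ε) * ⟪g u v, v⟫
        + ‖σ₁ u‖ ^ 2 + (1 / ε) * ‖σ₂ u v‖ ^ 2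
      ≤ -Cε * ((n1 u) ^ 2 + (n1 v) ^ 2) + C * (1 + ‖u‖ ^ 2 + ‖v‖ ^ 2) := by
  obtain ⟨hε0, hε1⟩ := hε
  have hK : (1:ℝ) ≤ 1 / ε := by rw [le_div_iff₀ hε0]; linarith
  have hK0 : (0:ℝ) < 1 / ε := by positivity
  set K := 1 / ε with hKdef
  refine ⟨1, one_pos, 3 * (Cf + Cσ₁ ^ 2 + K * (Cg + Cσ₂ ^ 2)) + 1, by positivity, ?_⟩
  intro u v
  have hxu : (0:ℝ) ≤ ‖u‖ := norm_nonneg _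
  have hxv : (0:ℝ) ≤ ‖v‖ := norm_nonneg _
  have hfb : ⟪f u v - B₂ u u, u⟫ = ⟪f u v, u⟫ := by
    rw [inner_sub_left, hB0]; ring
  have key : ∀ a x y : ℝ, 0 ≤ a → 0 ≤ x → 0 ≤ y →
      a * ((1 + x + y) * x) ≤ 3 * a * (1 + x ^ 2 + y ^ 2) := by
    intro a x y ha hx hy
    have : (1 + x + y) * x ≤ 3 * (1 + x ^ 2 + y ^ 2) := by
      nlinarith [sq_nonneg (x - y), sq_nonneg (1 - x)]
    nlinarith
  have key2 : ∀ a x y : ℝ, 0 ≤ a → 0 ≤ x → 0 ≤ y →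
      a * (1 + x + y) ^ 2 ≤ 3 * a * (1 + x ^ 2 + y ^ 2) := by
    intro a x y ha hx hy
    have : (1 + x + y) ^ 2 ≤ 3 * (1 + x ^ 2 + y ^ 2) := by
      nlinarith [sq_nonneg (x - y), sq_nonneg (1 - x), sq_nonneg (1 - y)]
    nlinarith
  have h1 : ⟪f u v, u⟫ ≤ 3 * Cf * (1 + ‖u‖ ^ 2 + ‖v‖ ^ 2) := by
    calc ⟪f u v, u⟫ ≤ ‖f u v‖ * ‖u‖ := real_inner_le_norm _ _
    _ ≤ Cf * (1 + ‖u‖ + ‖v‖) * ‖u‖ := mul_le_mul_of_nonneg_right (hf u v) hxu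
    _ = Cf * ((1 + ‖u‖ + ‖v‖) * ‖u‖) := by ring
    _ ≤ 3 * Cf * (1 + ‖u‖ ^ 2 + ‖v‖ ^ 2) := key _ _ _ hCf hxu hxv
  have h2 : K * ⟪g u v, v⟫ ≤ 3 * (K * Cg) * (1 + ‖u‖ ^ 2 + ‖v‖ ^ 2) := by
    have : ⟪g u v, v⟫ ≤ Cg * ((1 + ‖u‖ + ‖v‖) * ‖v‖) := by
      calc ⟪g u v, v⟫ ≤ ‖g u v‖ * ‖v‖ := real_inner_le_norm _ _
      _ ≤ Cg * (1 + ‖u‖ + ‖v‖) * ‖v‖ := mul_le_mul_of_nonneg_right (hg u v) hxv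
      _ = Cg * ((1 + ‖u‖ + ‖v‖) * ‖v‖) := by ring
    calc K * ⟪g u v, v⟫ ≤ K * (Cg * ((1 + ‖v‖ + ‖u‖) * ‖v‖)) := by
          refine mul_le_mul_of_nonneg_left ?_ hK0.le
          calc ⟪g u v, v⟫ ≤ Cg * ((1 + ‖u‖ + ‖v‖) * ‖v‖) := this
          _ = Cg * ((1 + ‖v‖ + ‖u‖) * ‖v‖) := by ring
    _ = (K * Cg) * ((1 + ‖v‖ + ‖u‖) * ‖v‖) := by ring
    _ ≤ 3 * (K * Cg) * (1 + ‖v‖ ^ 2 + ‖u‖ ^ 2) :=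
          key _ _ _ (mul_nonneg hK0.le hCg) hxv hxu
    _ = 3 * (K * Cg) * (1 + ‖u‖ ^ 2 + ‖v‖ ^ 2) := by ring
  have h3 : ‖σ₁ u‖ ^ 2 ≤ 3 * Cσ₁ ^ 2 * (1 + ‖u‖ ^ 2 + ‖v‖ ^ 2) := by
    calc ‖σ₁ u‖ ^ 2 ≤ (Cσ₁ * (1 + ‖u‖)) ^ 2 :=
          pow_le_pow_left₀ (norm_nonneg _) (hσ₁ u) 2
    _ = Cσ₁ ^ 2 * (1 + ‖u‖ + 0) ^ 2 := by ring
    _ ≤ 3 * Cσ₁ ^ 2 * (1 + ‖u‖ ^ 2 + 0 ^ 2) := key2 _ _ _ (sq_nonneg _) hxu le_rfl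
    _ ≤ 3 * Cσ₁ ^ 2 * (1 + ‖u‖ ^ 2 + ‖v‖ ^ 2) := by nlinarith [sq_nonneg Cσ₁, sq_nonneg ‖v‖]
  have h4 : K * ‖σ₂ u v‖ ^ 2 ≤ 3 * (K * Cσ₂ ^ 2) * (1 + ‖u‖ ^ 2 + ‖v‖ ^ 2) := by
    calc K * ‖σ₂ u v‖ ^ 2 ≤ K * (Cσ₂ * (1 + ‖u‖ + ‖v‖)) ^ 2 :=
          mul_le_mul_of_nonneg_left
            (pow_le_pow_left₀ (norm_nonneg _) (hσ₂ u v) 2) hK0.le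
    _ = (K * Cσ₂ ^ 2) * (1 + ‖u‖ + ‖v‖) ^ 2 := by ring
    _ ≤ 3 * (K * Cσ₂ ^ 2) * (1 + ‖u‖ ^ 2 + ‖v‖ ^ 2) :=
          key2 _ _ _ (mul_nonneg hK0.le (sq_nonneg _)) hxu hxv
  have hKv : K * -(n1 v) ^ 2 ≤ -(n1 v) ^ 2 := by nlinarith [sq_nonneg (n1 v)]
  have hpos : 0 ≤ 1 + ‖u‖ ^ 2 + ‖v‖ ^ 2 := by positivity
  rw [hA u, hA v, hfb]
  nlinarith [h1, h2, h3, h4, hKv, hpos]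
end
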